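/- arXiv:1907.06449 — 2 statements merged into one kernel-verified Lean document; each statement's English description precedes it below -/
import Mathlib

section
/- Let k ≥ 1, J = [[0, I_k], [−I_k, 0]] ∈ M_{2k}(ℝ), and Sp_k = { A ∈ GL_{2k}(ℝ) : Aᵀ J A = J }. Define A : ℝˣ → GL_{2k}(ℝ) by A(r) = [[I_k, 0], [0, r·I_k]] (block diagonal). Then A is an injective group homomorphism, each A(r) lies in the normalizer N(Sp_k) and satisfies A(r)ᵀ J A(r) = r·J, and every B ∈ N(Sp_k) admits a unique factorization B = S · A(r) with S ∈ Sp_k and r ∈ ℝˣ. -/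
/-!
If `B` normalizes `Sp_k`, then `B S B⁻¹ ∈ Sp_k` for every `S ∈ Sp_k`, which says exactly that
the form `M = Bᵀ J B` is `Sp_k`-invariant. As `J` is orthogonal, `Sᵀ M S = M` for a symplectic `S`
means that `S` commutes with `Jᵀ M`. Applied to the symplectic transvections `1 + v (J v)ᵀ`, this
makes every vector an eigenvector of `Jᵀ M`, so `M = c J` with `c ≠ 0`. Conversely every `B` with
`Bᵀ J B = c J` normalizes `Sp_k`, and `B A(c)⁻¹ ∈ Sp_k`; the factorization is unique because
`S A(r)` scales `J` by `r`.
-/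

open Matrix

/-- The standard symplectic matrix `J = [[0, I], [-I, 0]]`. -/
def symplJ (k : ℕ) : Matrix (Fin k ⊕ Fin k) (Fin k ⊕ Fin k) ℝ :=
  Matrix.fromBlocks 0 1 (-1) 0

/-- The symplectic group `Sp_k = { A ∈ GL_{2k}(ℝ) : Aᵀ J A = J }` as a subgroup
of `GL_{2k}(ℝ)`. -/
def SpGroup (k : ℕ) : Subgroup (GL (Fin k ⊕ Fin k) ℝ) where
  carrier := {A | (A : Matrix (Fin k ⊕ Fin k) (Fin k ⊕ Fin k) ℝ)ᵀ * symplJ k *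
    (A : Matrix (Fin k ⊕ Fin k) (Fin k ⊕ Fin k) ℝ) = symplJ k}
  one_mem' := by simp
  mul_mem' := by
    intro a b ha hb
    simp only [Set.mem_setOf_eq] at *
    set M := (a : Matrix (Fin k ⊕ Fin k) (Fin k ⊕ Fin k) ℝ)
    set N := (b : Matrix (Fin k ⊕ Fin k) (Fin k ⊕ Fin k) ℝ)
    have : ((a * b : GL (Fin k ⊕ Fin k) ℝ) : Matrix (Fin k ⊕ Fin k) (Fin k ⊕ Fin k) ℝ)
        = M * N := rfl
    rw [this, Matrix.transpose_mul]
    calc Nᵀ * Mᵀ * symplJ k * (M * N) = Nᵀ * (Mᵀ * symplJ k * M) * N := by noncomm_ring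
      _ = Nᵀ * symplJ k * N := by rw [ha]
      _ = symplJ k := hb
  inv_mem' := by
    intro a ha
    simp only [Set.mem_setOf_eq] at *
    set M := (a : Matrix (Fin k ⊕ Fin k) (Fin k ⊕ Fin k) ℝ)
    set N := ((a⁻¹ : GL (Fin k ⊕ Fin k) ℝ) : Matrix (Fin k ⊕ Fin k) (Fin k ⊕ Fin k) ℝ)
    have hMN : M * N = 1 := a.mul_inv
    have h1 : Nᵀ * (Mᵀ * symplJ k * M) * N = (M * N)ᵀ * symplJ k * (M * N) := by
      rw [Matrix.transpose_mul]; noncomm_ring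
    rw [ha, hMN] at h1
    simpa using h1

/-- The block-diagonal matrix `A(r) = [[I, 0], [0, r·I]]` as an element of
`GL_{2k}(ℝ)`. -/
noncomputable def spSplitting (k : ℕ) (r : ℝˣ) : GL (Fin k ⊕ Fin k) ℝ where
  val := Matrix.fromBlocks 1 0 0 ((r : ℝ) • 1)
  inv := Matrix.fromBlocks 1 0 0 (((r⁻¹ : ℝˣ) : ℝ) • 1)
  val_inv := by
    simp [Matrix.fromBlocks_multiply, Matrix.smul_mul, Matrix.mul_smul, smul_smul,
      ← Matrix.fromBlocks_one]
  inv_val := by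
    simp [Matrix.fromBlocks_multiply, Matrix.smul_mul, Matrix.mul_smul, smul_smul,
      ← Matrix.fromBlocks_one]

namespace Matrix

variable {n K : Type*} [Fintype n] [DecidableEq n]

section Field

variable [Field K]

theorem exists_eq_smul_one_of_forall_exists_mulVec_eq_smul {C : Matrix n n K}
    (h : ∀ v, ∃ c : K, C *ᵥ v = c • v) : ∃ a : K, C = a • 1 := by
  obtain ⟨a, ha⟩ := (toLin' C).exists_eq_smul_id_of_forall_notLinearIndependent fun v hv ↦ by
    obtain ⟨c, hc⟩ := h v
    simpa [hc] using LinearIndependent.pair_iff.mp hv c (-1)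
  exact ⟨a, by simpa [← smul_one_eq_diagonal] using congrArg LinearMap.toMatrix' ha⟩

theorem exists_mulVec_eq_smul_of_commute_vecMulVec {C : Matrix n n K} {v w : n → K}
    (hw : w ≠ 0) (h : Commute C (vecMulVec v w)) : ∃ c : K, C *ᵥ v = c • v := by
  obtain ⟨i, hi⟩ := Function.ne_iff.mp hw
  have key := congrArg (· *ᵥ Pi.single i 1) h.eq
  simp only [← mulVec_mulVec, vecMulVec_mulVec, op_smul_eq_smul, mulVec_smul,
    dotProduct_single, mul_one] at key
  exact ⟨(w i)⁻¹ * (w ⬝ᵥ C *ᵥ Pi.single i 1), by rw [mul_smul, ← key, inv_smul_smul₀ hi]⟩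

end Field

section CommRing

variable [CommRing K]

omit [DecidableEq n] in
theorem transpose_mul_mul_mul_eq_smul {J A B : Matrix n n K} {a b : K}
    (hA : Aᵀ * J * A = a • J) (hB : Bᵀ * J * B = b • J) :
    (A * B)ᵀ * J * (A * B) = (a * b) • J := by
  calc (A * B)ᵀ * J * (A * B) = Bᵀ * (Aᵀ * J * A) * B := by simp only [transpose_mul, mul_assoc]
    _ = (a * b) • J := by rw [hA, Matrix.mul_smul, Matrix.smul_mul, hB, smul_smul]

theorem commute_transpose_mul_of_transpose_mul_mul_eq {J M A : Matrix n n K}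
    (hJ : Jᵀ * J = 1) (hA : Aᵀ * J * A = J) (hM : Aᵀ * M * A = M) : Commute A (Jᵀ * M) := by
  have hAinv : A * (Jᵀ * Aᵀ * J) = 1 := mul_eq_one_comm.mp <| by
    rw [mul_assoc, mul_assoc, ← mul_assoc Aᵀ, hA, hJ]
  have hAJ : A * Jᵀ * Aᵀ = Jᵀ := by
    simpa [mul_assoc, mul_eq_one_comm.mp hJ] using congrArg (· * Jᵀ) hAinv
  calc A * (Jᵀ * M) = A * Jᵀ * (Aᵀ * M * A) := by rw [hM, mul_assoc]
    _ = A * Jᵀ * Aᵀ * M * A := by simp only [mul_assoc]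
    _ = Jᵀ * M * A := by rw [hAJ]

theorem mul_mul_inv_transpose_mul_mul_eq_iff (J : Matrix n n K) (B S : GL n K) :
    ((B * S * B⁻¹ : GL n K) : Matrix n n K)ᵀ * J * (B * S * B⁻¹ : GL n K) = J ↔
      (S : Matrix n n K)ᵀ * ((B : Matrix n n K)ᵀ * J * B) * S = (B : Matrix n n K)ᵀ * J * B := by
  set P : Matrix n n K := ↑B
  set Q : Matrix n n K := ↑B⁻¹
  have hPQ : P * Q = 1 := B.mul_inv
  have hQP : Q * P = 1 := B.inv_mul
  have cancel (X : Matrix n n K) : Pᵀ * (Qᵀ * X * Q) * P = X := by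
    rw [show Pᵀ * (Qᵀ * X * Q) * P = (Q * P)ᵀ * X * (Q * P) by
      simp only [transpose_mul, Matrix.mul_assoc], hQP, transpose_one, one_mul, mul_one]
  have congr_inj : Function.Injective fun X : Matrix n n K ↦ Qᵀ * X * Q := fun X Y h ↦ by
    simpa only [cancel] using congrArg (Pᵀ * · * P) h
  have hJ : Qᵀ * (Pᵀ * J * P) * Q = J := by
    rw [show Qᵀ * (Pᵀ * J * P) * Q = (P * Q)ᵀ * J * (P * Q) by
      simp only [transpose_mul, Matrix.mul_assoc], hPQ, transpose_one, one_mul, mul_one]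
  calc _ ↔ Qᵀ * ((S : Matrix n n K)ᵀ * (Pᵀ * J * P) * S) * Q = Qᵀ * (Pᵀ * J * P) * Q := by
        rw [Units.val_mul, Units.val_mul, hJ]
        simp only [transpose_mul, Matrix.mul_assoc]
        exact Iff.rfl
    _ ↔ _ := congr_inj.eq_iff

end CommRing

section Skew

variable [CommRing K] [NoZeroDivisors K] [CharZero K] {J : Matrix n n K}

omit [DecidableEq n] in
theorem dotProduct_mulVec_self_eq_zero_of_transpose_eq_neg (hJ : Jᵀ = -J) (v : n → K) :
    v ⬝ᵥ J *ᵥ v = 0 := by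
  refine CharZero.eq_neg_self_iff.mp ?_
  conv_lhs => rw [dotProduct_mulVec, ← mulVec_transpose, hJ, neg_mulVec, neg_dotProduct,
    dotProduct_comm]

omit [DecidableEq n] in
theorem vecMulVec_mulVec_mul_self_eq_zero (hJ : Jᵀ = -J) (v : n → K) :
    vecMulVec v (J *ᵥ v) * vecMulVec v (J *ᵥ v) = 0 := by
  rw [vecMulVec_mul_vecMulVec, dotProduct_comm,
    dotProduct_mulVec_self_eq_zero_of_transpose_eq_neg hJ, zero_smul, vecMulVec_zero]

def symplecticTransvection (hJ : Jᵀ = -J) (v : n → K) : GL n K where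
  val := 1 + vecMulVec v (J *ᵥ v)
  inv := 1 - vecMulVec v (J *ᵥ v)
  val_inv := by simp [add_mul, mul_sub, vecMulVec_mulVec_mul_self_eq_zero hJ]
  inv_val := by simp [sub_mul, mul_add, vecMulVec_mulVec_mul_self_eq_zero hJ]

theorem coe_symplecticTransvection (hJ : Jᵀ = -J) (v : n → K) :
    (symplecticTransvection hJ v : Matrix n n K) = 1 + vecMulVec v (J *ᵥ v) :=
  rfl

theorem transpose_symplecticTransvection_mul_mul (hJ : Jᵀ = -J) (v : n → K) :
    (symplecticTransvection hJ v : Matrix n n K)ᵀ * J * symplecticTransvection hJ v = J := by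
  set w := J *ᵥ v
  have hvJ : v ᵥ* J = -w := by rw [← mulVec_transpose, hJ, neg_mulVec]
  have hwv : w ⬝ᵥ v = 0 := by
    rw [dotProduct_comm]; exact dotProduct_mulVec_self_eq_zero_of_transpose_eq_neg hJ v
  have expand : (1 + vecMulVec v w)ᵀ * J * (1 + vecMulVec v w) =
      J + (vecMulVec w (v ᵥ* J) + vecMulVec (J *ᵥ v) w) +
        vecMulVec w (v ᵥ* J) * vecMulVec v w := by
    simp only [transpose_add, transpose_one, transpose_vecMulVec, ← vecMulVec_mul,
      ← mul_vecMulVec]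
    noncomm_ring
  change (1 + vecMulVec v w)ᵀ * J * (1 + vecMulVec v w) = J
  rw [expand, hvJ, vecMulVec_mul_vecMulVec, neg_dotProduct, hwv]
  simp [vecMulVec_neg, w]

end Skew

theorem exists_eq_smul_of_forall_transpose_mul_mul_eq [Field K] [CharZero K]
    {J M : Matrix n n K} (hJ : Jᵀ = -J) (hJJ : Jᵀ * J = 1)
    (hM : ∀ S : GL n K, (S : Matrix n n K)ᵀ * J * S = J → (S : Matrix n n K)ᵀ * M * S = M) :
    ∃ c : K, M = c • J := by
  have hcomm (v : n → K) : Commute (Jᵀ * M) (vecMulVec v (J *ᵥ v)) := by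
    have hT := transpose_symplecticTransvection_mul_mul hJ v
    simpa [coe_symplecticTransvection] using
      (commute_transpose_mul_of_transpose_mul_mul_eq hJJ hT (hM _ hT)).symm.sub_right
        (Commute.one_right _)
  obtain ⟨c, hc⟩ := exists_eq_smul_one_of_forall_exists_mulVec_eq_smul (C := Jᵀ * M) fun v ↦ by
    by_cases hv : v = 0
    · exact ⟨0, by simp [hv]⟩
    refine exists_mulVec_eq_smul_of_commute_vecMulVec (fun hJv ↦ hv ?_) (hcomm v)
    simpa [mulVec_mulVec, hJJ] using congrArg (Jᵀ *ᵥ ·) hJv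
  refine ⟨c, ?_⟩
  calc M = J * (Jᵀ * M) := by rw [← mul_assoc, mul_eq_one_comm.mp hJJ, one_mul]
    _ = c • J := by rw [hc, Matrix.mul_smul, mul_one]

end Matrix

variable {k : ℕ}

theorem mem_SpGroup_iff {S : GL (Fin k ⊕ Fin k) ℝ} :
    S ∈ SpGroup k ↔ (S : Matrix (Fin k ⊕ Fin k) (Fin k ⊕ Fin k) ℝ)ᵀ * symplJ k * S = symplJ k :=
  Iff.rfl

theorem symplJ_transpose (k : ℕ) : (symplJ k)ᵀ = -symplJ k := by
  simp [symplJ, fromBlocks_transpose, fromBlocks_neg]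

theorem symplJ_transpose_mul_self (k : ℕ) : (symplJ k)ᵀ * symplJ k = 1 := by
  rw [symplJ_transpose, symplJ]
  simp [fromBlocks_neg, fromBlocks_multiply, ← fromBlocks_one]

theorem smul_symplJ_injective (hk : 1 ≤ k) : Function.Injective fun c : ℝ ↦ c • symplJ k :=
  fun a b h ↦ by simpa [symplJ] using congrFun (congrFun h (Sum.inl ⟨0, hk⟩)) (Sum.inr ⟨0, hk⟩)

theorem mem_normalizer_SpGroup_of_transpose_mul_mul_eq_smul {B : GL (Fin k ⊕ Fin k) ℝ} {c : ℝ}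
    (hc : c ≠ 0)
    (hB : (B : Matrix (Fin k ⊕ Fin k) (Fin k ⊕ Fin k) ℝ)ᵀ * symplJ k * B = c • symplJ k) :
    B ∈ Subgroup.normalizer (SpGroup k : Set (GL (Fin k ⊕ Fin k) ℝ)) := by
  refine Subgroup.mem_normalizer_iff.mpr fun S ↦ ?_
  rw [mem_SpGroup_iff, mem_SpGroup_iff, mul_mul_inv_transpose_mul_mul_eq_iff, hB,
    Matrix.mul_smul, Matrix.smul_mul, (smul_right_injective _ hc).eq_iff]

theorem exists_transpose_mul_mul_eq_smul_of_mem_normalizer (hk : 1 ≤ k)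
    {B : GL (Fin k ⊕ Fin k) ℝ}
    (hB : B ∈ Subgroup.normalizer (SpGroup k : Set (GL (Fin k ⊕ Fin k) ℝ))) :
    ∃ c : ℝˣ, (B : Matrix (Fin k ⊕ Fin k) (Fin k ⊕ Fin k) ℝ)ᵀ * symplJ k * B =
      (c : ℝ) • symplJ k := by
  obtain ⟨c, hc⟩ := exists_eq_smul_of_forall_transpose_mul_mul_eq (symplJ_transpose k)
    (symplJ_transpose_mul_self k) fun S hS ↦
      (mul_mul_inv_transpose_mul_mul_eq_iff _ B S).mp ((Subgroup.mem_normalizer_iff.mp hB S).mp hS)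
  have hc0 : c ≠ 0 := by
    rintro rfl
    have hJ : symplJ k = 0 :=
      calc symplJ k = (↑B * ↑B⁻¹ : Matrix _ _ ℝ)ᵀ * symplJ k * (↑B * ↑B⁻¹) := by simp
        _ = (↑B⁻¹ : Matrix _ _ ℝ)ᵀ * ((↑B)ᵀ * symplJ k * ↑B) * ↑B⁻¹ := by
          simp only [transpose_mul, Matrix.mul_assoc]
        _ = 0 := by simp [hc]
    exact one_ne_zero (smul_symplJ_injective hk (by simp [hJ]))
  exact ⟨Units.mk0 c hc0, hc⟩

theorem coe_spSplitting (r : ℝˣ) :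
    (spSplitting k r : Matrix (Fin k ⊕ Fin k) (Fin k ⊕ Fin k) ℝ) =
      fromBlocks 1 0 0 ((r : ℝ) • 1) :=
  rfl

theorem spSplitting_mul (r s : ℝˣ) :
    spSplitting k (r * s) = spSplitting k r * spSplitting k s :=
  Units.ext <| by simp [coe_spSplitting, fromBlocks_multiply, smul_smul, mul_comm]

theorem spSplitting_inv (r : ℝˣ) : spSplitting k r⁻¹ = (spSplitting k r)⁻¹ :=
  Units.ext rfl

theorem transpose_spSplitting_mul_mul (r : ℝˣ) :
    (spSplitting k r : Matrix (Fin k ⊕ Fin k) (Fin k ⊕ Fin k) ℝ)ᵀ * symplJ k * spSplitting k r =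
      (r : ℝ) • symplJ k := by
  simp [coe_spSplitting, symplJ, fromBlocks_transpose, fromBlocks_multiply, fromBlocks_smul]

theorem existsUnique_mem_SpGroup_eq_mul_spSplitting (hk : 1 ≤ k) {B : GL (Fin k ⊕ Fin k) ℝ}
    {r : ℝˣ}
    (hB : (B : Matrix (Fin k ⊕ Fin k) (Fin k ⊕ Fin k) ℝ)ᵀ * symplJ k * B = (r : ℝ) • symplJ k) :
    ∃! p : GL (Fin k ⊕ Fin k) ℝ × ℝˣ, p.1 ∈ SpGroup k ∧ B = p.1 * spSplitting k p.2 := by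
  refine ⟨(B * spSplitting k r⁻¹, r), ⟨?_, by simp [spSplitting_inv]⟩, ?_⟩
  · rw [mem_SpGroup_iff, Units.val_mul]
    simpa using transpose_mul_mul_mul_eq_smul hB (transpose_spSplitting_mul_mul r⁻¹)
  · rintro ⟨S, s⟩ ⟨hS, rfl⟩
    have hs : (s : ℝ) = r := smul_symplJ_injective hk <| by
      dsimp only at hS hB ⊢
      rw [← hB, Units.val_mul, transpose_mul_mul_mul_eq_smul (a := 1) (by rwa [one_smul])
        (transpose_spSplitting_mul_mul s), one_mul]
    obtain rfl := Units.ext hs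
    simp [spSplitting_inv]

/-- Splitting and semidirect product decomposition in the paper's Lemma 5.2
(lem:N(Sp)): `r ↦ [[I, 0], [0, r·I]]` is an injective group homomorphism into
the normalizer of `Sp_k` satisfying `A(r)ᵀ J A(r) = r·J`, and every element of
`N(Sp_k)` factors uniquely as `S·A(r)` with `S ∈ Sp_k` and `r ∈ ℝˣ`. -/
theorem sp_normalizer_splitting (k : ℕ) (hk : 1 ≤ k) :
    Function.Injective (spSplitting k) ∧
    (∀ r s : ℝˣ, spSplitting k (r * s) = spSplitting k r * spSplitting k s) ∧
    (∀ r : ℝˣ, spSplitting k r ∈ Subgroup.normalizer ((SpGroup k : Set (GL (Fin k ⊕ Fin k) ℝ)))) ∧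
    (∀ r : ℝˣ,
      ((spSplitting k r : GL (Fin k ⊕ Fin k) ℝ) :
          Matrix (Fin k ⊕ Fin k) (Fin k ⊕ Fin k) ℝ)ᵀ * symplJ k *
        ((spSplitting k r : GL (Fin k ⊕ Fin k) ℝ) :
          Matrix (Fin k ⊕ Fin k) (Fin k ⊕ Fin k) ℝ) = (r : ℝ) • symplJ k) ∧
    ∀ B ∈ Subgroup.normalizer ((SpGroup k : Set (GL (Fin k ⊕ Fin k) ℝ))),
      ∃! p : GL (Fin k ⊕ Fin k) ℝ × ℝˣ,
        p.1 ∈ SpGroup k ∧ B = p.1 * spSplitting k p.2 := by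
  refine ⟨fun r s h ↦ Units.ext <| smul_symplJ_injective hk ?_, spSplitting_mul,
    fun r ↦ mem_normalizer_SpGroup_of_transpose_mul_mul_eq_smul r.ne_zero
      (transpose_spSplitting_mul_mul r),
    transpose_spSplitting_mul_mul, fun B hB ↦ ?_⟩
  · simp only [← transpose_spSplitting_mul_mul, h]
  · obtain ⟨r, hr⟩ := exists_transpose_mul_mul_eq_smul_of_mem_normalizer hk hB
    exact existsUnique_mem_SpGroup_eq_mul_spSplitting hk hr
end

section
/- Let k ≥ 1, J = [[0, I_k], [−I_k, 0]] ∈ M_{2k}(ℝ), and G_ℂ = { A ∈ GL_{2k}(ℝ) : A·J = J·A }. Then an invertible matrix B ∈ GL_{2k}(ℝ) lies in the normalizer N(G_ℂ) of G_ℂ in GL_{2k}(ℝ) if and only if B·J = J·B or B·J = −J·B. -/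
/-!
`G_ℂ` is the centralizer of `J` in `GL_{2k}(ℝ)`, so `B` normalizes it iff `B J B⁻¹` has the same
centralizer as `J`. Such an element commutes with all of `G_ℂ`; testing against `J` and against
`diag(t, t)` for the transvections `t` shows that it has the form `a + b J`. Being conjugate to `J`,
it squares to `-1`, which forces `a = 0` and `b = ±1`.
-/

open Matrix

/-- The image `G_ℂ = { A ∈ GL_{2k}(ℝ) : A·J = J·A }` of `GL_k(ℂ)` under its
standard real embedding, as a subgroup of `GL_{2k}(ℝ)`. -/
def GLC (k : ℕ) : Subgroup (GL (Fin k ⊕ Fin k) ℝ) where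
  carrier := {A | (A : Matrix (Fin k ⊕ Fin k) (Fin k ⊕ Fin k) ℝ) * symplJ k =
    symplJ k * (A : Matrix (Fin k ⊕ Fin k) (Fin k ⊕ Fin k) ℝ)}
  one_mem' := by simp
  mul_mem' := by
    intro a b ha hb
    simp only [Set.mem_setOf_eq] at *
    set M := (a : Matrix (Fin k ⊕ Fin k) (Fin k ⊕ Fin k) ℝ)
    set N := (b : Matrix (Fin k ⊕ Fin k) (Fin k ⊕ Fin k) ℝ)
    have : ((a * b : GL (Fin k ⊕ Fin k) ℝ) : Matrix (Fin k ⊕ Fin k) (Fin k ⊕ Fin k) ℝ)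
        = M * N := rfl
    rw [this, mul_assoc, hb, ← mul_assoc, ha, mul_assoc]
  inv_mem' := by
    intro a ha
    simp only [Set.mem_setOf_eq] at *
    set M := (a : Matrix (Fin k ⊕ Fin k) (Fin k ⊕ Fin k) ℝ)
    set N := ((a⁻¹ : GL (Fin k ⊕ Fin k) ℝ) : Matrix (Fin k ⊕ Fin k) (Fin k ⊕ Fin k) ℝ)
    have hMN : M * N = 1 := a.mul_inv
    have hNM : N * M = 1 := a.inv_mul
    calc N * symplJ k = N * symplJ k * (M * N) := by rw [hMN, mul_one]
      _ = N * (symplJ k * M) * N := by noncomm_ring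
      _ = N * (M * symplJ k) * N := by rw [ha]
      _ = (N * M) * (symplJ k * N) := by noncomm_ring
      _ = symplJ k * N := by rw [hNM, one_mul]

namespace Subgroup

variable {G : Type*} [Group G]

lemma mem_centralizer_singleton_conj_iff {g j x : G} :
    x ∈ centralizer {g * j * g⁻¹} ↔ g⁻¹ * x * g ∈ centralizer {j} := by
  simp only [mem_centralizer_singleton_iff]
  constructor <;> intro h
  · calc g⁻¹ * x * g * j = g⁻¹ * (x * (g * j * g⁻¹)) * g := by group
      _ = g⁻¹ * ((g * j * g⁻¹) * x) * g := by rw [h]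
      _ = j * (g⁻¹ * x * g) := by group
  · calc x * (g * j * g⁻¹) = g * (g⁻¹ * x * g * j) * g⁻¹ := by group
      _ = g * (j * (g⁻¹ * x * g)) * g⁻¹ := by rw [h]
      _ = g * j * g⁻¹ * x := by group

lemma mem_normalizer_centralizer_singleton_iff {g j : G} :
    g ∈ normalizer (centralizer {j} : Set G) ↔ centralizer {g * j * g⁻¹} = centralizer {j} := by
  simp only [mem_normalizer_iff'', Subgroup.ext_iff, mem_centralizer_singleton_conj_iff,
    Iff.comm]

lemma centralizer_singleton_neg [HasDistribNeg G] (j : G) :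
    centralizer {-j} = centralizer {j} := by
  ext x
  simp only [mem_centralizer_singleton_iff, neg_mul, mul_neg, neg_inj]

end Subgroup

lemma Matrix.commute_fromBlocks_diag_iff {n R : Type*} [Fintype n] [Ring R]
    {M A B C D : Matrix n n R} :
    Commute (fromBlocks M 0 0 M) (fromBlocks A B C D) ↔
      Commute M A ∧ Commute M B ∧ Commute M C ∧ Commute M D := by
  simp [Commute, SemiconjBy, fromBlocks_multiply, fromBlocks_inj]

section symplJ

variable {k : ℕ}

lemma commute_symplJ_fromBlocks_iff {A B C D : Matrix (Fin k) (Fin k) ℝ} :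
    Commute (symplJ k) (fromBlocks A B C D) ↔ C = -B ∧ D = A := by
  simp only [symplJ, Commute, SemiconjBy, fromBlocks_multiply, fromBlocks_inj, Matrix.mul_zero,
    Matrix.zero_mul, Matrix.mul_one, Matrix.one_mul, Matrix.mul_neg, Matrix.neg_mul, add_zero,
    zero_add, neg_inj]
  grind

lemma symplJ_mul_self : symplJ k * symplJ k = -1 := by
  simp [symplJ, fromBlocks_multiply, ← fromBlocks_one, fromBlocks_neg]

lemma exists_eq_smul_one_add_smul_symplJ {K : Matrix (Fin k ⊕ Fin k) (Fin k ⊕ Fin k) ℝ}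
    (hJ : Commute (symplJ k) K)
    (ht : ∀ t : TransvectionStruct (Fin k) ℝ,
      Commute (fromBlocks t.toMatrix 0 0 t.toMatrix) K) :
    ∃ a b : ℝ, K = a • 1 + b • symplJ k := by
  rw [← fromBlocks_toBlocks K] at hJ ht ⊢
  obtain ⟨hC, hD⟩ := commute_symplJ_fromBlocks_iff.mp hJ
  obtain ⟨a, ha⟩ := mem_range_scalar_of_commute_transvectionStruct fun t ↦
    (commute_fromBlocks_diag_iff.mp (ht t)).1
  obtain ⟨b, hb⟩ := mem_range_scalar_of_commute_transvectionStruct fun t ↦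
    (commute_fromBlocks_diag_iff.mp (ht t)).2.1
  refine ⟨a, b, ?_⟩
  rw [hC, hD, ← ha, ← hb, symplJ, ← fromBlocks_one, fromBlocks_smul, fromBlocks_smul,
    fromBlocks_add]
  simp [smul_one_eq_diagonal]

lemma smul_one_add_smul_symplJ_mul_self (a b : ℝ) :
    (a • 1 + b • symplJ k) * (a • 1 + b • symplJ k) =
      (a * a - b * b) • 1 + (2 * a * b) • symplJ k := by
  simp only [add_mul, mul_add, smul_mul_smul, mul_one, one_mul, symplJ_mul_self]
  module

lemma smul_one_add_smul_symplJ_eq_symplJ_or_neg {a b : ℝ}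
    (h : (a • 1 + b • symplJ k) * (a • 1 + b • symplJ k) = -1) :
    a • 1 + b • symplJ k = symplJ k ∨ a • 1 + b • symplJ k = -symplJ k := by
  rcases isEmpty_or_nonempty (Fin k) with _ | ⟨⟨i⟩⟩
  · exact Or.inl (Subsingleton.elim _ _)
  rw [smul_one_add_smul_symplJ_mul_self] at h
  have h11 := congrFun (congrFun h (.inl i)) (.inl i)
  have h12 := congrFun (congrFun h (.inl i)) (.inr i)
  simp only [symplJ, Matrix.add_apply, Matrix.smul_apply, one_apply_eq, smul_eq_mul, mul_one,
    fromBlocks_apply₁₁, Matrix.zero_apply, mul_zero, add_zero, Matrix.neg_apply, ne_eq,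
    reduceCtorEq, not_false_eq_true, one_apply_ne, fromBlocks_apply₁₂, zero_add, neg_zero,
    mul_eq_zero, OfNat.ofNat_ne_zero, false_or] at h11 h12
  obtain rfl : a = 0 := h12.resolve_right fun hb ↦ by nlinarith [hb ▸ h11]
  rcases mul_self_eq_one_iff.mp (by linarith : b * b = 1) with rfl | rfl <;> simp

end symplJ

def symplJUnit (k : ℕ) : GL (Fin k ⊕ Fin k) ℝ :=
  ⟨symplJ k, -symplJ k, by simp [symplJ_mul_self], by simp [symplJ_mul_self]⟩

@[simp] lemma coe_symplJUnit (k : ℕ) :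
    (symplJUnit k : Matrix (Fin k ⊕ Fin k) (Fin k ⊕ Fin k) ℝ) = symplJ k := rfl

lemma symplJUnit_mul_self (k : ℕ) : symplJUnit k * symplJUnit k = -1 := by
  ext1; simp [symplJ_mul_self]

lemma GLC_eq_centralizer (k : ℕ) : GLC k = Subgroup.centralizer {symplJUnit k} := by
  ext g
  rw [Subgroup.mem_centralizer_singleton_iff, Units.ext_iff]
  rfl

section symplJUnit

variable {k : ℕ}

lemma exists_eq_smul_one_add_smul_symplJ_of_mem_centralizer {K : GL (Fin k ⊕ Fin k) ℝ}
    (hK : K ∈ Subgroup.centralizer (Subgroup.centralizer {symplJUnit k} : Set _)) :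
    ∃ a b : ℝ, (K : Matrix (Fin k ⊕ Fin k) (Fin k ⊕ Fin k) ℝ) = a • 1 + b • symplJ k := by
  have hcomm (g) (hg : g ∈ Subgroup.centralizer {symplJUnit k}) : Commute g.val K.val :=
    congrArg Units.val (hK g hg)
  refine exists_eq_smul_one_add_smul_symplJ
    (hcomm _ (Subgroup.mem_centralizer_singleton_iff.mpr rfl)) fun t ↦ hcomm
      ⟨fromBlocks t.toMatrix 0 0 t.toMatrix, fromBlocks t.inv.toMatrix 0 0 t.inv.toMatrix,
        by simp [fromBlocks_multiply, t.mul_inv], by simp [fromBlocks_multiply, t.inv_mul]⟩ ?_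
  refine Subgroup.mem_centralizer_singleton_iff.mpr (Units.ext ?_)
  exact (commute_fromBlocks_diag_iff.mpr ⟨.zero_right _, .one_right _,
    (Commute.one_right _).neg_right, .zero_right _⟩).eq

lemma centralizer_singleton_eq_centralizer_symplJUnit_iff {K : GL (Fin k ⊕ Fin k) ℝ}
    (hK : K * K = -1) :
    Subgroup.centralizer {K} = Subgroup.centralizer {symplJUnit k} ↔
      K = symplJUnit k ∨ K = -symplJUnit k := by
  constructor
  · intro h
    have hKK : K ∈ Subgroup.centralizer (Subgroup.centralizer {K} : Set _) :=
      fun g hg ↦ Subgroup.mem_centralizer_singleton_iff.mp hg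
    obtain ⟨a, b, hab⟩ := exists_eq_smul_one_add_smul_symplJ_of_mem_centralizer (h ▸ hKK)
    have hsq := congrArg Units.val hK
    rw [Units.val_mul, hab, Units.val_neg, Units.val_one] at hsq
    rcases smul_one_add_smul_symplJ_eq_symplJ_or_neg hsq with h | h
    · exact .inl (Units.ext (hab.trans h))
    · exact .inr (Units.ext (hab.trans h))
  · rintro (rfl | rfl)
    · rfl
    · exact Subgroup.centralizer_singleton_neg _

end symplJUnit

theorem mem_normalizer_GLC_iff_general (k : ℕ) (B : GL (Fin k ⊕ Fin k) ℝ) :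
    B ∈ Subgroup.normalizer ((GLC k : Set (GL (Fin k ⊕ Fin k) ℝ))) ↔
      (B : Matrix (Fin k ⊕ Fin k) (Fin k ⊕ Fin k) ℝ) * symplJ k =
          symplJ k * (B : Matrix (Fin k ⊕ Fin k) (Fin k ⊕ Fin k) ℝ) ∨
        (B : Matrix (Fin k ⊕ Fin k) (Fin k ⊕ Fin k) ℝ) * symplJ k =
          -(symplJ k * (B : Matrix (Fin k ⊕ Fin k) (Fin k ⊕ Fin k) ℝ)) := by
  have hsq : B * symplJUnit k * B⁻¹ * (B * symplJUnit k * B⁻¹) = -1 := by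
    calc _ = B * (symplJUnit k * symplJUnit k) * B⁻¹ := by group
      _ = -1 := by simp [symplJUnit_mul_self]
  rw [GLC_eq_centralizer, Subgroup.mem_normalizer_centralizer_singleton_iff,
    centralizer_singleton_eq_centralizer_symplJUnit_iff hsq, mul_inv_eq_iff_eq_mul,
    mul_inv_eq_iff_eq_mul, Units.ext_iff, Units.ext_iff]
  simp

/-- Characterization of the normalizer of `G_ℂ = GL_k(ℂ)` in `GL_{2k}(ℝ)`
(paper's Lemma 6.1): `B ∈ N(G_ℂ)` iff `B·J = J·B` or `B·J = -J·B`. -/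
theorem mem_normalizer_GLC_iff (k : ℕ) (hk : 1 ≤ k) (B : GL (Fin k ⊕ Fin k) ℝ) :
    B ∈ Subgroup.normalizer ((GLC k : Set (GL (Fin k ⊕ Fin k) ℝ))) ↔
      (B : Matrix (Fin k ⊕ Fin k) (Fin k ⊕ Fin k) ℝ) * symplJ k =
          symplJ k * (B : Matrix (Fin k ⊕ Fin k) (Fin k ⊕ Fin k) ℝ) ∨
        (B : Matrix (Fin k ⊕ Fin k) (Fin k ⊕ Fin k) ℝ) * symplJ k =
          -(symplJ k * (B : Matrix (Fin k ⊕ Fin k) (Fin k ⊕ Fin k) ℝ)) :=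
  mem_normalizer_GLC_iff_general k B
end
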